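/- arXiv:1907.04133 — 2 statements merged into one kernel-verified Lean document; each statement's English description precedes it below -/
import Mathlib

section
/- For every integer T with 2 ≤ T ≤ 50, the function f(x, T) = (0.366)^x · (G₁(T) + x·G₂(T)) is strictly decreasing in x on (0, ∞), where G₁(T) = (1 + 6T) − 7·(0.4751)^{T−1} and G₂(T) = (1 + 6T) − 7·(0.7981)^{T−1}. -/
/-- For every integer `T` with `2 ≤ T ≤ 50`, the function
`f(x, T) = (0.366)^x · (G₁(T) + x·G₂(T))` is strictly decreasing in `x` on `(0, ∞)`,
where `G₁(T) = (1 + 6T) − 7·(0.4751)^(T−1)` and `G₂(T) = (1 + 6T) − 7·(0.7981)^(T−1)`. -/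
theorem f_strictAntiOn (T : ℕ) (hT2 : 2 ≤ T) (hT50 : T ≤ 50) :
    StrictAntiOn
      (fun x : ℝ => (0.366 : ℝ) ^ x *
        (((1 + 6 * (T : ℝ)) - 7 * (0.4751 : ℝ) ^ (T - 1)) +
          x * ((1 + 6 * (T : ℝ)) - 7 * (0.7981 : ℝ) ^ (T - 1))))
      (Set.Ioi 0) := by
  set g1 : ℝ := (1 + 6 * (T : ℝ)) - 7 * (0.4751 : ℝ) ^ (T - 1) with hg1def
  set g2 : ℝ := (1 + 6 * (T : ℝ)) - 7 * (0.7981 : ℝ) ^ (T - 1) with hg2def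
  have hTn : (2 : ℝ) ≤ (T : ℝ) := by exact_mod_cast hT2
  have hn1 : 1 ≤ T - 1 := by omega
  have hpow2 : (0.7981 : ℝ) ^ (T - 1) ≤ (0.7981 : ℝ) ^ 1 :=
    pow_le_pow_of_le_one (by norm_num) (by norm_num) hn1
  have hg2 : 0 < g2 := by
    rw [hg2def]
    have : (0.7981 : ℝ) ^ (T - 1) ≤ 0.7981 := by simpa using hpow2
    nlinarith
  have hg12 : g2 < g1 := by
    have h : (0.4751 : ℝ) ^ (T - 1) < (0.7981 : ℝ) ^ (T - 1) :=
      pow_lt_pow_left₀ (by norm_num) (by norm_num) (by omega)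
    rw [hg1def, hg2def]; nlinarith
  have hlog : Real.log (0.366 : ℝ) < -1 := by
    rw [Real.log_lt_iff_lt_exp (by norm_num)]
    have h := Real.exp_one_lt_d9
    have : Real.exp (-1) = (Real.exp 1)⁻¹ := by
      rw [Real.exp_neg]
    rw [this]
    rw [lt_inv_comm₀ (by norm_num) (Real.exp_pos 1)]
    calc Real.exp 1 < 2.7182818286 := h
    _ < (0.366 : ℝ)⁻¹ := by norm_num
  apply strictAntiOn_of_deriv_neg (convex_Ioi 0)
  · intro x _
    exact (((Real.hasStrictDerivAt_const_rpow (by norm_num : (0:ℝ) < 0.366) x).hasDerivAt).mul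
      ((hasDerivAt_const x g1).add
        ((hasDerivAt_id x).mul (hasDerivAt_const x g2)))).continuousAt.continuousWithinAt
  · intro x hx
    rw [interior_Ioi] at hx
    have hd : HasDerivAt
        (fun x : ℝ => (0.366 : ℝ) ^ x * (g1 + x * g2))
        ((0.366 : ℝ) ^ x * Real.log 0.366 * (g1 + x * g2)
          + (0.366 : ℝ) ^ x * (0 + (1 * g2 + x * 0))) x := by
      exact ((Real.hasStrictDerivAt_const_rpow (by norm_num) x).hasDerivAt).mul
        ((hasDerivAt_const x g1).add ((hasDerivAt_id x).mul (hasDerivAt_const x g2)))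
    rw [hd.deriv]
    have hpos : (0 : ℝ) < (0.366 : ℝ) ^ x := Real.rpow_pos_of_pos (by norm_num) x
    have hs : 0 < g1 + x * g2 := by nlinarith [(Set.mem_Ioi.mp hx).le, hx]
    have : Real.log 0.366 * (g1 + x * g2) < -1 * (g1 + x * g2) :=
      mul_lt_mul_of_pos_right hlog hs
    have h2 : g2 < g1 + x * g2 := by nlinarith [Set.mem_Ioi.mp hx]
    nlinarith [mul_lt_mul_of_pos_left this hpos, mul_lt_mul_of_pos_left h2 hpos]
end

section
/- For any real ñ₁ with ñ₁ ≥ 160 (corresponding to ñ₁ ≥ 1.6ℓ with ℓ ≥ 100) and any integer T ≥ 2, G₁(T)·(1 − 1.6/ñ₁)^{ñ₁} + 1.6·G₂(T)·(1 − 1.6/ñ₁)^{ñ₁−1} < 6T − 4, where G₁(T) = (1 + 6T) − 7·(0.4751)^{T−1} > 0 and G₂(T) = (1 + 6T) − 7·(0.7981)^{T−1} > 0. -/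
/-! Since `(1 - 1.6/n₁)^n₁ ≤ e^{-1.6} < 0.202` and `1 - 1.6/n₁ ≥ 0.99`, while `0 < G₁, G₂ ≤ 1 + 6T`,
the left side is at most `0.202 (1 + 1.6/0.99) (1 + 6T) < 0.53 (1 + 6T)`, which is below `6T - 4`
once `T ≥ 2`. -/

open Real

lemma Real.exp_neg_one_point_six_lt : rexp (-1.6) < 0.202 := by
  -- `log 5 ≈ 1.6094` is just above `1.6`, so `exp 1.6 ≥ 5 (1 + 1.6 - log 5) > 1 / 0.202`.
  have h : 4.951 < rexp 1.6 :=
    calc (4.951 : ℝ) < 5 * (1.6 - log 5 + 1) := by linarith [log_five_lt_d9]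
      _ ≤ rexp (log 5) * rexp (1.6 - log 5) := by
        rw [exp_log (by norm_num)]; gcongr; exact add_one_le_exp _
      _ = rexp 1.6 := by rw [← exp_add]; ring_nf
  rw [exp_neg, inv_lt_comm₀ (exp_pos _) (by norm_num)]
  linarith

lemma Real.one_sub_div_rpow_le_exp_neg {x t : ℝ} (hx : 0 < x) (ht : t ≤ x) :
    (1 - t / x) ^ x ≤ rexp (-t) :=
  calc (1 - t / x) ^ x ≤ rexp (-(t / x)) ^ x := by
        gcongr
        · exact sub_nonneg.2 <| div_le_one_of_le₀ ht hx.le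
        · exact one_sub_le_exp_neg _
    _ = rexp (-t) := by rw [← exp_mul]; field_simp

/-- The paper's `G₁(T)` and `G₂(T)` are `G 0.4751 T` and `G 0.7981 T`. -/
def G (r : ℝ) (T : ℕ) : ℝ := 1 + 6 * (T : ℝ) - 7 * r ^ (T - 1)

lemma G_pos {r : ℝ} (hr₀ : 0 ≤ r) (hr₁ : r ≤ 1) {T : ℕ} (hT : 2 ≤ T) : 0 < G r T := by
  have hT' : (2 : ℝ) ≤ T := by exact_mod_cast hT
  have : r ^ (T - 1) ≤ 1 := pow_le_one₀ hr₀ hr₁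
  unfold G
  linarith

lemma G_le {r : ℝ} (hr : 0 ≤ r) (T : ℕ) : G r T ≤ 1 + 6 * (T : ℝ) := by
  unfold G
  linarith [pow_nonneg hr (T - 1)]

/-- For any real `ñ₁ ≥ 160` and any integer `T ≥ 2`,
`G₁(T)·(1 − 1.6/ñ₁)^ñ₁ + 1.6·G₂(T)·(1 − 1.6/ñ₁)^(ñ₁−1) < 6T − 4`, where
`G₁(T) = (1 + 6T) − 7·(0.4751)^(T−1) > 0` and `G₂(T) = (1 + 6T) − 7·(0.7981)^(T−1) > 0`. -/
theorem prop4_necessary_condition_fails (n₁ : ℝ) (hn₁ : 160 ≤ n₁) (T : ℕ) (hT : 2 ≤ T) :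
    (0 : ℝ) < (1 + 6 * (T : ℝ)) - 7 * (0.4751 : ℝ) ^ (T - 1) ∧
    (0 : ℝ) < (1 + 6 * (T : ℝ)) - 7 * (0.7981 : ℝ) ^ (T - 1) ∧
    ((1 + 6 * (T : ℝ)) - 7 * (0.4751 : ℝ) ^ (T - 1)) * (1 - 1.6 / n₁) ^ n₁ +
        1.6 * ((1 + 6 * (T : ℝ)) - 7 * (0.7981 : ℝ) ^ (T - 1)) * (1 - 1.6 / n₁) ^ (n₁ - 1)
      < 6 * (T : ℝ) - 4 := by
  have hG₁ : 0 < G 0.4751 T := G_pos (by norm_num) (by norm_num) hT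
  have hG₂ : 0 < G 0.7981 T := G_pos (by norm_num) (by norm_num) hT
  refine ⟨hG₁, hG₂, ?_⟩
  have hn₀ : 0 < n₁ := by linarith
  have hx : 0.99 ≤ 1 - 1.6 / n₁ := by
    have : 1.6 / n₁ ≤ 0.01 := by rw [div_le_iff₀ hn₀]; linarith
    linarith
  set x := 1 - 1.6 / n₁
  have hxn : x ^ n₁ ≤ 0.202 :=
    (one_sub_div_rpow_le_exp_neg hn₀ (by linarith)).trans exp_neg_one_point_six_lt.le
  have hxn₁ : x ^ (n₁ - 1) ≤ 0.202 / 0.99 := by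
    rw [rpow_sub_one (by positivity)]
    gcongr
  have hT' : (2 : ℝ) ≤ T := by exact_mod_cast hT
  calc G 0.4751 T * x ^ n₁ + 1.6 * G 0.7981 T * x ^ (n₁ - 1)
      ≤ (1 + 6 * T) * 0.202 + 1.6 * (1 + 6 * T) * (0.202 / 0.99) := by
        gcongr
        · exact G_le (by norm_num) T
        · exact G_le (by norm_num) T
    _ < 6 * T - 4 := by linarith
end
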